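/- Assume 0 ≤ d ≤ (n+m)/(4(n+m−1)) and set λ = (n+m−1)d/(n+m) (equivalently λ = d/(1+ρ)). Then the quadruple y_n = b_n − (n−1)λ, y_{n+m} = (n+1)λ − 2a_n − b_n, y_1 = 0, y_{n+1} = a_{n+m} − a_n is such that (λ, y) is a solution of the four-variable system (S); in particular λ = d/(1+ρ) is an eigenvalue of (S). -/

import Mathlib

/-!
Write `S₁ = b_n`, `S₂ = b_m` and `N = n + m`. The choice `λ = d / (1 + ρ)` is exactly the balance
condition `N λ = S₁ + a_n + S₂ + a_{n+m}`, and with it every equation of (S) can be checked by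
hand: in each one the claimed value is attained by one alternative of the `min`, and the other
alternative exceeds it by `1 - 4λ`, `1 - 3λ`, `(n - 1)(1 - 2λ)` or `(m - 1)(1 - 2λ)`. All four
gaps are nonnegative because `d ≤ N / (4 (N - 1))` means `λ ≤ 1/4`.
-/

open Finset

/-- The four-variable system (S), with variables `y1 = y_1`, `yn = y_n`,
`yn1 = y_{n+1}`, `ynm = y_{n+m}`. -/
def Ssol (n m : ℕ) (a : ℕ → ℝ) (lam y1 yn yn1 ynm : ℝ) : Prop :=
  yn = min ((1 - (a n + a (n + m))) - 2 * lam + y1 + yn1 - ynm)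
      ((∑ i ∈ Finset.Icc 1 (n - 1), a i) - ((n : ℝ) - 1) * lam + y1) ∧
  ynm = min ((1 - (a n + a (n + m))) - lam + y1 + yn1 - yn)
      ((∑ i ∈ Finset.Icc (n + 1) (n + m - 1), a i) - ((m : ℝ) - 1) * lam + yn1) ∧
  y1 = min (a n - lam + (yn + ynm) / 2)
      ((∑ i ∈ Finset.Icc 1 (n - 1), (1 - a i)) - ((n : ℝ) - 1) * lam + yn) ∧
  yn1 = min (a (n + m) - lam + (yn + ynm) / 2)
      ((∑ i ∈ Finset.Icc (n + 1) (n + m - 1), (1 - a i)) - ((m : ℝ) - 1) * lam + ynm)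

theorem sum_Icc_one_add_eq {M : Type*} [AddCommMonoid M] (f : ℕ → M) {n m : ℕ}
    (hn : 1 ≤ n) (hm : 1 ≤ m) :
    ∑ i ∈ Icc 1 (n + m), f i =
      (∑ i ∈ Icc 1 (n - 1), f i) + f n + (∑ i ∈ Icc (n + 1) (n + m - 1), f i) + f (n + m) := by
  obtain ⟨n, rfl⟩ := Nat.exists_eq_add_of_le' hn
  obtain ⟨m, rfl⟩ := Nat.exists_eq_add_of_le' hm
  simp only [Nat.add_sub_cancel, ← Nat.add_assoc, ← Ico_add_one_right_eq_Icc]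
  rw [sum_Ico_succ_top (by omega), ← sum_Ico_consecutive f (by omega : 1 ≤ n + 1) (by omega),
    sum_eq_sum_Ico_succ_bot (by omega : n + 1 < n + 1 + m + 1)]
  abel

theorem sum_Icc_one_sub (f : ℕ → ℝ) (p q : ℕ) :
    ∑ i ∈ Icc p q, (1 - f i) = ((q + 1 - p : ℕ) : ℝ) - ∑ i ∈ Icc p q, f i := by
  simp [sum_sub_distrib]

theorem Ssol_of_mul_eq_sum {n m : ℕ} (hn : 1 ≤ n) (hm : 1 ≤ m) (a : ℕ → ℝ) {lam : ℝ}
    (hsum : ((n : ℝ) + m) * lam = ∑ i ∈ Icc 1 (n + m), a i) (hlam : 4 * lam ≤ 1) :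
    Ssol n m a lam 0
      ((∑ i ∈ Icc 1 (n - 1), a i) - ((n : ℝ) - 1) * lam)
      (a (n + m) - a n)
      (((n : ℝ) + 1) * lam - 2 * a n - (∑ i ∈ Icc 1 (n - 1), a i)) := by
  set S₁ := ∑ i ∈ Icc 1 (n - 1), a i
  set S₂ := ∑ i ∈ Icc (n + 1) (n + m - 1), a i
  have hbalance : ((n : ℝ) + m) * lam = S₁ + a n + S₂ + a (n + m) := by
    rw [hsum, sum_Icc_one_add_eq a hn hm]
  have hcompl₁ : ∑ i ∈ Icc 1 (n - 1), (1 - a i) = ((n : ℝ) - 1) - S₁ := by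
    rw [sum_Icc_one_sub, show n - 1 + 1 - 1 = n - 1 by omega, Nat.cast_sub hn, Nat.cast_one]
  have hcompl₂ : ∑ i ∈ Icc (n + 1) (n + m - 1), (1 - a i) = ((m : ℝ) - 1) - S₂ := by
    rw [sum_Icc_one_sub, show n + m - 1 + 1 - (n + 1) = m - 1 by omega, Nat.cast_sub hm,
      Nat.cast_one]
  have hgap₁ : 0 ≤ ((n : ℝ) - 1) * (1 - 2 * lam) :=
    mul_nonneg (sub_nonneg.mpr (Nat.one_le_cast.mpr hn)) (by linarith)
  have hgap₂ : 0 ≤ ((m : ℝ) - 1) * (1 - 2 * lam) :=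
    mul_nonneg (sub_nonneg.mpr (Nat.one_le_cast.mpr hm)) (by linarith)
  refine ⟨?_, ?_, ?_, ?_⟩
  · rw [min_eq_right (by linarith)]
    ring
  · rw [min_eq_right (by linarith)]
    linarith
  · rw [hcompl₁, min_eq_left (by linarith)]
    ring
  · rw [hcompl₂, min_eq_left (by linarith)]
    ring

theorem stmt6_general (n m : ℕ) (hn : 2 ≤ n) (hm : 2 ≤ m) (a : ℕ → ℝ)
    (d : ℝ) (hd : d = (∑ i ∈ Finset.Icc 1 (n + m), a i) / ((n : ℝ) + (m : ℝ) - 1))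
    (hd1 : d ≤ ((n : ℝ) + (m : ℝ)) / (4 * ((n : ℝ) + (m : ℝ) - 1)))
    (lam : ℝ) (hlam : lam = ((n : ℝ) + (m : ℝ) - 1) * d / ((n : ℝ) + (m : ℝ))) :
    Ssol n m a lam 0
      ((∑ i ∈ Finset.Icc 1 (n - 1), a i) - ((n : ℝ) - 1) * lam)
      (a (n + m) - a n)
      (((n : ℝ) + 1) * lam - 2 * a n - (∑ i ∈ Finset.Icc 1 (n - 1), a i)) := by
  have hN : (0 : ℝ) < n + m - 1 := by
    have : (4 : ℝ) ≤ n + m := by exact_mod_cast Nat.add_le_add hn hm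
    linarith
  have hsum : ((n : ℝ) + m) * lam = ∑ i ∈ Icc 1 (n + m), a i := by
    rw [hlam, hd]
    field_simp
  have hquarter : 4 * lam ≤ 1 := by
    rw [le_div_iff₀ (by positivity)] at hd1
    rw [hlam, mul_div_assoc', div_le_one (by linarith)]
    linarith
  exact Ssol_of_mul_eq_sum (by omega) (by omega) a hsum hquarter

theorem stmt6 (n m : ℕ) (hn : 2 ≤ n) (hm : 2 ≤ m) (a : ℕ → ℝ)
    (ha : ∀ i : ℕ, 1 ≤ i → i ≤ n + m → 0 ≤ a i ∧ a i ≤ 1)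
    (hprio : a n + a (n + m) ≤ 1)
    (d : ℝ) (hd : d = (∑ i ∈ Finset.Icc 1 (n + m), a i) / ((n : ℝ) + (m : ℝ) - 1))
    (hd0 : 0 ≤ d) (hd1 : d ≤ ((n : ℝ) + (m : ℝ)) / (4 * ((n : ℝ) + (m : ℝ) - 1)))
    (lam : ℝ) (hlam : lam = ((n : ℝ) + (m : ℝ) - 1) * d / ((n : ℝ) + (m : ℝ))) :
    Ssol n m a lam 0
      ((∑ i ∈ Finset.Icc 1 (n - 1), a i) - ((n : ℝ) - 1) * lam)
      (a (n + m) - a n)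
      (((n : ℝ) + 1) * lam - 2 * a n - (∑ i ∈ Finset.Icc 1 (n - 1), a i)) :=
  stmt6_general n m hn hm a d hd hd1 lam hlam
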